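/- For every finite simple graph G, the following two assertions are equivalent: (i) every connected induced subgraph H of G with at least one edge satisfies 3·τ_c(H) ≤ 4·τ(H); (ii) G contains no induced subgraph isomorphic to P_5 or C_4. -/

import Mathlib

open SimpleGraph

/-- `C` is a vertex cover of `G`: every edge of `G` has an endpoint in `C`. -/
def IsVertexCover {V : Type} (G : SimpleGraph V) (C : Set V) : Prop :=
  ∀ ⦃u v : V⦄, G.Adj u v → u ∈ C ∨ v ∈ C

/-- `C` is a connected vertex cover of `G`: a vertex cover inducing a connected subgraph. -/
def IsConnectedVertexCover {V : Type} (G : SimpleGraph V) (C : Set V) : Prop :=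
  _root_.IsVertexCover G C ∧ (G.induce C).Connected

/-- The vertex cover number `τ(G)`. -/
noncomputable def tau {V : Type} (G : SimpleGraph V) : ℕ :=
  sInf {n | ∃ C : Set V, _root_.IsVertexCover G C ∧ C.ncard = n}

/-- The connected vertex cover number `τ_c(G)`. -/
noncomputable def tauc {V : Type} (G : SimpleGraph V) : ℕ :=
  sInf {n | ∃ C : Set V, IsConnectedVertexCover G C ∧ C.ncard = n}

/-- `G` is `H`-free: `G` has no induced subgraph isomorphic to `H`
(equivalently, there is no graph embedding of `H` into `G`). -/
def HFree {W V : Type} (H : SimpleGraph W) (G : SimpleGraph V) : Prop :=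
  IsEmpty (H ↪g G)

/-! Let `C` be a minimum vertex cover of a connected `(P₅, C₄)`-free graph `H`, and for
`y ∉ C` let `K(y)` be the union of the components of `H[C]` containing a neighbour of `y`. For
nonadjacent `y, b` the sets `K(y)`, `K(b)` are nested or disjoint: otherwise a shortest connection
through a common component, extended at both ends by private neighbours of `y` and `b`, contains an
induced `P₅`. Since `H` is connected, a vertex `y ∉ C` maximising `|K(y)|` therefore has
`K(y) = C`, so `C ∪ {y}` is a connected vertex cover and `τ_c ≤ τ + 1`, which is enough when
`τ ≥ 3`. When `τ ≤ 2` a connected vertex cover of size `τ` exists; the only nontrivial case, a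
cover by two nonadjacent vertices, is settled by `C₄`- and `P₅`-freeness. Conversely `P₅` and
`C₄` themselves have `τ = 2` and `τ_c = 3`. -/

section CoverNumbers

variable {V W : Type} {G : SimpleGraph V} {G' : SimpleGraph W} {C : Set V}

lemma isVertexCover_univ (G : SimpleGraph V) : _root_.IsVertexCover G Set.univ :=
  fun _ _ _ => Or.inl trivial

lemma tau_le_ncard (hC : _root_.IsVertexCover G C) : tau G ≤ C.ncard :=
  Nat.sInf_le (show C.ncard ∈ _ from ⟨C, hC, rfl⟩)

lemma tauc_le_ncard (hC : IsConnectedVertexCover G C) : tauc G ≤ C.ncard :=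
  Nat.sInf_le (show C.ncard ∈ _ from ⟨C, hC, rfl⟩)

lemma exists_ncard_eq_sInf {P : Set V → Prop} (h : ∃ C, P C) :
    ∃ C, P C ∧ C.ncard = sInf {n | ∃ C, P C ∧ C.ncard = n} :=
  Nat.sInf_mem (s := {n | ∃ C, P C ∧ C.ncard = n}) (h.elim fun C hC => ⟨_, C, hC, rfl⟩)

lemma exists_isVertexCover_ncard_eq_tau (G : SimpleGraph V) :
    ∃ C, _root_.IsVertexCover G C ∧ C.ncard = tau G :=
  exists_ncard_eq_sInf ⟨_, isVertexCover_univ G⟩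

lemma exists_isConnectedVertexCover_ncard_eq_tauc (hG : G.Connected) :
    ∃ C, IsConnectedVertexCover G C ∧ C.ncard = tauc G :=
  exists_ncard_eq_sInf ⟨_, isVertexCover_univ G, (induceUnivIso G).connected_iff.mpr hG⟩

lemma IsVertexCover.image (e : G ≃g G') (hC : _root_.IsVertexCover G C) :
    _root_.IsVertexCover G' (e '' C) := by
  intro u v huv
  rw [← e.apply_symm_apply u, ← e.apply_symm_apply v] at huv ⊢
  exact (hC (e.map_adj_iff.1 huv)).imp (Set.mem_image_of_mem e) (Set.mem_image_of_mem e)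

lemma IsConnectedVertexCover.image (e : G ≃g G') (hC : IsConnectedVertexCover G C) :
    IsConnectedVertexCover G' (e '' C) :=
  ⟨hC.1.image e, (e.induce e.injective.injOn.bijOn_image).connected_iff.mp hC.2⟩

lemma setOf_ncard_eq_of_equiv (e : V ≃ W) {P : Set V → Prop} {Q : Set W → Prop}
    (hPQ : ∀ C, P C → Q (e '' C)) (hQP : ∀ D, Q D → P (e.symm '' D)) :
    {n | ∃ C, P C ∧ C.ncard = n} = {n | ∃ D, Q D ∧ D.ncard = n} := by
  ext n
  constructor
  · rintro ⟨C, hC, rfl⟩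
    exact ⟨_, hPQ C hC, Set.ncard_image_of_injective C e.injective⟩
  · rintro ⟨D, hD, rfl⟩
    exact ⟨_, hQP D hD, Set.ncard_image_of_injective D e.symm.injective⟩

lemma tau_congr (e : G ≃g G') : tau G = tau G' :=
  congrArg sInf <| setOf_ncard_eq_of_equiv e.toEquiv (fun _ h => h.image e)
    (fun _ h => h.image e.symm)

lemma tauc_congr (e : G ≃g G') : tauc G = tauc G' :=
  congrArg sInf <| setOf_ncard_eq_of_equiv e.toEquiv (fun _ h => h.image e)
    (fun _ h => h.image e.symm)

end CoverNumbers

section SmallGraphs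

variable {V W : Type} {G : SimpleGraph V}

-- Phrased with `Finset`s so that `decide` can check the hypothesis on a small graph.
lemma three_le_tauc_of_small_covers [Fintype V] [DecidableEq V] (hG : G.Connected)
    (h : ∀ s : Finset V, s.card ≤ 2 → (∀ u v, G.Adj u v → u ∈ s ∨ v ∈ s) →
      ∃ a ∈ s, ∃ b ∈ s, a ≠ b ∧ ∀ c ∈ s, ¬G.Adj a c) :
    3 ≤ tauc G := by
  obtain ⟨C, ⟨hcover, hconn⟩, hcard⟩ := exists_isConnectedVertexCover_ncard_eq_tauc hG
  by_contra! hlt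
  obtain ⟨a, ha, b, hb, hab, ha_isolated⟩ := h C.toFinite.toFinset
    (by rw [← Set.ncard_eq_toFinset_card]; omega) (fun u v huv => by simpa using hcover huv)
  rw [Set.Finite.mem_toFinset] at ha hb
  have : Nontrivial C := Set.nontrivial_coe_sort.mpr ⟨a, ha, b, hb, hab⟩
  obtain ⟨c, hac⟩ := hconn.preconnected.exists_adj_of_nontrivial ⟨a, ha⟩
  exact ha_isolated c (by simp) hac

lemma tau_pathGraph_five_le : tau (pathGraph 5) ≤ 2 :=
  (tau_le_ncard (C := {1, 3}) fun u v => by fin_cases u <;> fin_cases v <;> simp [pathGraph_adj])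
    |>.trans_eq (Set.ncard_pair (by decide))

lemma tau_cycleGraph_four_le : tau (cycleGraph 4) ≤ 2 :=
  (tau_le_ncard (C := {0, 2}) fun u v => by fin_cases u <;> fin_cases v <;> simp <;> decide)
    |>.trans_eq (Set.ncard_pair (by decide))

lemma three_le_tauc_pathGraph_five : 3 ≤ tauc (pathGraph 5) :=
  three_le_tauc_of_small_covers (pathGraph_connected 4) (by simp only [pathGraph_adj]; decide)

lemma three_le_tauc_cycleGraph_four : 3 ≤ tauc (cycleGraph 4) :=
  three_le_tauc_of_small_covers cycleGraph_connected (by decide)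

lemma exists_induce_four_mul_tau_lt_of_embedding {P : SimpleGraph W} (f : P ↪g G)
    (hP : P.Connected) {i j : W} (hij : P.Adj i j) (htau : tau P ≤ 2) (htauc : 3 ≤ tauc P) :
    ∃ S : Set V, (G.induce S).Connected ∧ (G.induce S).edgeSet.Nonempty ∧
      4 * tau (G.induce S) < 3 * tauc (G.induce S) := by
  let e := f.isoInduceRange
  refine ⟨Set.range f, e.connected_iff.mp hP, ⟨s(e i, e j), e.map_adj_iff.mpr hij⟩, ?_⟩
  rw [← tau_congr e, ← tauc_congr e]
  omega

end SmallGraphs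

section InducedPatterns

variable {V W : Type} {H : SimpleGraph V}

lemma HFree.induce {P : SimpleGraph W} (h : HFree P H) (S : Set V) : HFree P (H.induce S) :=
  ⟨fun f => h.false ((Embedding.induce S).comp f)⟩

lemma HFree.false_of_induced_path5 (hfree : HFree (pathGraph 5) H) {a b c d e : V}
    (hab : H.Adj a b) (hbc : H.Adj b c) (hcd : H.Adj c d) (hde : H.Adj d e)
    (hac : ¬H.Adj a c) (had : ¬H.Adj a d) (hae : ¬H.Adj a e) (hbd : ¬H.Adj b d)
    (hbe : ¬H.Adj b e) (hce : ¬H.Adj c e) : False := by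
  have hadj : ∀ i j,
      H.Adj (![a, b, c, d, e] i) (![a, b, c, d, e] j) ↔ (pathGraph 5).Adj i j := by
    intro i j
    fin_cases i <;> fin_cases j <;> simp [pathGraph_adj, H.adj_comm, *]
  -- Unlike `C₄`, `P₅` has no two vertices with the same neighbourhood, so the adjacency pattern
  -- alone forces `a, b, c, d, e` to be distinct.
  have htwin_free : ∀ i j : Fin 5,
      (∀ k, (pathGraph 5).Adj i k ↔ (pathGraph 5).Adj j k) → i = j := by
    simp only [pathGraph_adj]
    decide
  have hinj : Function.Injective ![a, b, c, d, e] := fun i j hij =>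
    htwin_free i j fun k => by rw [← hadj, ← hadj, hij]
  exact hfree.false ⟨⟨_, hinj⟩, hadj _ _⟩

lemma HFree.false_of_induced_cycle4 (hfree : HFree (cycleGraph 4) H) {a b c d : V}
    (hab : H.Adj a b) (hbc : H.Adj b c) (hcd : H.Adj c d) (hda : H.Adj d a)
    (hac : ¬H.Adj a c) (hbd : ¬H.Adj b d) (hac' : a ≠ c) (hbd' : b ≠ d) : False := by
  have hadj : ∀ i j, H.Adj (![a, b, c, d] i) (![a, b, c, d] j) ↔ (cycleGraph 4).Adj i j := by
    intro i j
    fin_cases i <;> fin_cases j <;>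
      simp [cycleGraph_adj, hab, hbc, hcd, hda, hab.symm, hbc.symm, hcd.symm, hda.symm, hac, hbd,
        mt H.adj_symm hac, mt H.adj_symm hbd] <;> decide
  have hinj : Function.Injective ![a, b, c, d] := by
    have hne : a ≠ b ∧ b ≠ c ∧ c ≠ d ∧ d ≠ a := ⟨hab.ne, hbc.ne, hcd.ne, hda.ne⟩
    intro i j hij
    fin_cases i <;> fin_cases j <;> simp_all [eq_comm]
  exact hfree.false ⟨⟨_, hinj⟩, hadj _ _⟩

end InducedPatterns

section ReachThrough

variable {V : Type} {H : SimpleGraph V} {C : Set V} {y b u x z : V}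

/-- The induced subgraph `H[C]` as a graph on all of `V`; vertices outside `C` are isolated. -/
def spanningInduce (H : SimpleGraph V) (C : Set V) : SimpleGraph V :=
  ((⊤ : H.Subgraph).induce C).spanningCoe

@[simp]
lemma spanningInduce_adj : (spanningInduce H C).Adj u x ↔ u ∈ C ∧ x ∈ C ∧ H.Adj u x := by
  simp [spanningInduce]

lemma spanningInduce_mono {C' : Set V} (h : C ⊆ C') :
    spanningInduce H C ≤ spanningInduce H C' :=
  fun _ _ huv => by
    rw [spanningInduce_adj] at huv ⊢
    exact ⟨h huv.1, h huv.2.1, huv.2.2⟩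

lemma mem_of_reachable_spanningInduce (h : (spanningInduce H C).Reachable u x) (hu : u ∈ C) :
    x ∈ C := by
  induction (reachable_iff_reflTransGen u x).mp h with
  | refl => exact hu
  | tail _ hst => exact (spanningInduce_adj.mp hst).2.1

lemma induce_connected_of_forall_reachable (hu : u ∈ C)
    (h : ∀ x ∈ C, (spanningInduce H C).Reachable u x) : (H.induce C).Connected := by
  have key : ∀ x, Relation.ReflTransGen (spanningInduce H C).Adj u x →
      ∀ hx : x ∈ C, (H.induce C).Reachable ⟨u, hu⟩ ⟨x, hx⟩ := by
    intro x hux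
    induction hux with
    | refl => exact fun _ => Reachable.refl _
    | tail _ hst ih =>
      rw [spanningInduce_adj] at hst
      exact fun _ => (ih hst.1).trans (Adj.reachable hst.2.2)
  rw [connected_iff_exists_forall_reachable]
  exact ⟨⟨u, hu⟩, fun ⟨x, hx⟩ => key x ((reachable_iff_reflTransGen u x).mp (h x hx)) hx⟩

/-- `K(y)`: the union of the components of `H[C]` containing a neighbour of `y`. -/
def reachThrough (H : SimpleGraph V) (C : Set V) (y : V) : Set V :=
  {x | ∃ u ∈ C, H.Adj y u ∧ (spanningInduce H C).Reachable u x}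

lemma reachThrough_subset : reachThrough H C y ⊆ C :=
  fun _ ⟨_, hu, _, hux⟩ => mem_of_reachable_spanningInduce hux hu

lemma mem_reachThrough_of_adj (hyu : H.Adj y u) (hu : u ∈ C) : u ∈ reachThrough H C y :=
  ⟨u, hu, hyu, Reachable.refl _⟩

lemma mem_reachThrough_of_reachable (hx : x ∈ reachThrough H C y)
    (hxz : (spanningInduce H C).Reachable x z) : z ∈ reachThrough H C y :=
  let ⟨u, hu, hyu, hux⟩ := hx
  ⟨u, hu, hyu, hux.trans hxz⟩

lemma mem_reachThrough_of_adj_mem (hx : x ∈ reachThrough H C y) (hxz : H.Adj x z) (hz : z ∈ C) :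
    z ∈ reachThrough H C y :=
  mem_reachThrough_of_reachable hx <|
    Adj.reachable (spanningInduce_adj.mpr ⟨reachThrough_subset hx, hz, hxz⟩)

/-- A shortest such walk `p ⋯ q`, preceded by `u', y` and, if it is too short, followed by
`b, c`, is an induced path on at least five vertices. -/
lemma false_of_walk_of_private_neighbours (hfree : HFree (pathGraph 5) H) (hyb : ¬H.Adj y b)
    {u' c : V} (hyu' : H.Adj y u') (hu' : u' ∈ C) (hu'b : u' ∉ reachThrough H C b)
    (hbc : H.Adj b c) (hc : c ∈ C) (hcy : c ∉ reachThrough H C y) {p q : V}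
    (w : (spanningInduce H C).Walk p q) (hyp : H.Adj y p) (hp : p ∈ C) (hbq : H.Adj b q) :
    False := by
  have hu'_b : ¬H.Adj u' b := fun h => hu'b (mem_reachThrough_of_adj h.symm hu')
  have hu'_not_adj : ∀ v ∈ reachThrough H C b, ¬H.Adj u' v := fun v hv h =>
    hu'b (mem_reachThrough_of_adj_mem hv h.symm hu')
  have hseen : ∀ v, (spanningInduce H C).Reachable v q → v ∈ reachThrough H C b :=
    fun v hv => mem_reachThrough_of_reachable
      (mem_reachThrough_of_adj hbq (mem_of_reachable_spanningInduce w.reachable hp)) hv.symm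
  have hcommon : ∀ v, H.Adj y v → v ∈ C → H.Adj b v → False := fun v hyv hv hbv =>
    hfree.false_of_induced_path5 hyu'.symm hyv hbv.symm hbc
      (hu'_not_adj _ (mem_reachThrough_of_adj hbv hv)) hu'_b
      (hu'_not_adj c (mem_reachThrough_of_adj hbc hc)) hyb
      (fun h => hcy (mem_reachThrough_of_adj h hc))
      (fun h => hcy (mem_reachThrough_of_adj_mem (mem_reachThrough_of_adj hyv hv) h hc))
  induction hn : w.length using Nat.strong_induction_on generalizing p with
  | _ n ih =>
  cases w with
  | nil => exact hcommon _ hyp hp hbq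
  | @cons _ p₁ _ h₁ w₁ =>
    have hp₁ := (spanningInduce_adj.mp h₁).2.1
    by_cases hyp₁ : H.Adj y p₁
    · exact ih _ (by simp only [← hn, Walk.length_cons]; omega) w₁ hyp₁ hp₁ rfl
    cases w₁ with
    | nil =>
      by_cases hbp : H.Adj b p
      · exact hcommon p hyp hp hbp
      exact hfree.false_of_induced_path5 hyu'.symm hyp (spanningInduce_adj.mp h₁).2.2 hbq.symm
        (hu'_not_adj p (hseen p (Adj.reachable h₁))) (hu'_not_adj _ (hseen _ (Reachable.refl _)))
        hu'_b hyp₁ hyb (fun h => hbp h.symm)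
    | @cons _ p₂ _ h₂ w₂ =>
      have hp₂ := (spanningInduce_adj.mp h₂).2.1
      by_cases hyp₂ : H.Adj y p₂
      · exact ih _ (by simp only [← hn, Walk.length_cons]; omega) w₂ hyp₂ hp₂ rfl
      by_cases hpp₂ : H.Adj p p₂
      · exact ih _ (by simp only [← hn, Walk.length_cons]; omega)
          (Walk.cons (spanningInduce_adj.mpr ⟨hp, hp₂, hpp₂⟩) w₂) hyp hp rfl
      exact hfree.false_of_induced_path5 hyu'.symm hyp (spanningInduce_adj.mp h₁).2.2
        (spanningInduce_adj.mp h₂).2.2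
        (hu'_not_adj p (hseen p (Walk.cons h₁ (Walk.cons h₂ w₂)).reachable))
        (hu'_not_adj _ (hseen _ (Walk.cons h₂ w₂).reachable))
        (hu'_not_adj _ (hseen _ w₂.reachable)) hyp₁ hyp₂ hpp₂

lemma reachThrough_subset_or_subset (hfree : HFree (pathGraph 5) H) (hyb : ¬H.Adj y b)
    (hmeet : (reachThrough H C y ∩ reachThrough H C b).Nonempty) :
    reachThrough H C y ⊆ reachThrough H C b ∨ reachThrough H C b ⊆ reachThrough H C y := by
  by_contra! h
  obtain ⟨x, ⟨u', hu', hyu', hu'x⟩, hxb⟩ := Set.not_subset.mp h.1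
  obtain ⟨z, ⟨c, hc, hbc, hcz⟩, hzy⟩ := Set.not_subset.mp h.2
  obtain ⟨a, ⟨p, hp, hyp, hpa⟩, ⟨q, -, hbq, hqa⟩⟩ := hmeet
  obtain ⟨w⟩ := hpa.trans hqa.symm
  exact false_of_walk_of_private_neighbours hfree hyb hyu' hu'
    (fun h => hxb (mem_reachThrough_of_reachable h hu'x)) hbc hc
    (fun h => hzy (mem_reachThrough_of_reachable h hcz)) w hyp hp hbq

lemma exists_link_of_not_mem_reachThrough (hconn : H.Connected)
    (hC : _root_.IsVertexCover H C) (hy : y ∉ C) {x : V} (hx : x ∈ C)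
    (hxy : x ∉ reachThrough H C y) :
    ∃ b ∉ C, (∃ a ∈ reachThrough H C y, H.Adj b a) ∧
      ∃ c ∈ C, c ∉ reachThrough H C y ∧ H.Adj b c := by
  -- `b` is where a walk from `y` to `x` first leaves `S`.
  set S := reachThrough H C y ∪ {v | v ∉ C ∧ ∀ w, H.Adj v w → w ∈ reachThrough H C y}
  have hyS : y ∈ S := Or.inr ⟨hy, fun w hyw =>
    mem_reachThrough_of_adj hyw ((hC hyw).resolve_left hy)⟩
  have hxS : x ∉ S := fun h => h.elim hxy fun h => h.1 hx
  obtain ⟨⟨⟨p, b⟩, hpb⟩, -, hp, hb⟩ :=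
    (hconn.preconnected y x).some.exists_boundary_dart S hyS hxS
  simp only [S, Set.mem_union, Set.mem_ofPred_eq, not_or, not_and, not_forall] at hp hb
  obtain ⟨hbK, hbC⟩ := hb
  rcases hp with hp | ⟨-, hpK⟩
  · have hbC' : b ∉ C := fun h => hbK (mem_reachThrough_of_adj_mem hp hpb h)
    obtain ⟨c, hbc, hc⟩ := hbC hbC'
    exact ⟨b, hbC', ⟨p, hp, hpb.symm⟩, c, (hC hbc).resolve_left hbC', hc, hbc⟩
  · exact absurd (hpK b hpb) hbK

lemma exists_subset_reachThrough [Finite V] (hconn : H.Connected) (hfree : HFree (pathGraph 5) H)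
    (hC : _root_.IsVertexCover H C) (hCV : C ≠ Set.univ) :
    ∃ y ∉ C, C ⊆ reachThrough H C y := by
  obtain ⟨y, hy, hmax⟩ := Set.exists_max_image Cᶜ (fun y => (reachThrough H C y).ncard)
    (Set.toFinite _) (Set.nonempty_compl.mpr hCV)
  refine ⟨y, hy, fun x hx => ?_⟩
  by_contra hxy
  obtain ⟨b, hb, ⟨a, ha, hba⟩, c, hc, hcy, hbc⟩ :=
    exists_link_of_not_mem_reachThrough hconn hC hy hx hxy
  have hcb : c ∈ reachThrough H C b := mem_reachThrough_of_adj hbc hc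
  rcases reachThrough_subset_or_subset hfree (fun h => (hC h).elim hy hb)
    ⟨a, ha, mem_reachThrough_of_adj hba (reachThrough_subset ha)⟩ with hsub | hsub
  · exact (hmax b hb).not_gt
      (Set.ncard_lt_ncard (hsub.ssubset_of_not_subset fun h => hcy (h hcb)))
  · exact hcy (hsub hcb)

end ReachThrough

section ConnectedCover

variable {V : Type} {H : SimpleGraph V} {C : Set V} {y : V}

lemma induce_insert_connected_of_subset_reachThrough (hCy : C ⊆ reachThrough H C y) :
    (H.induce (insert y C)).Connected := by
  refine induce_connected_of_forall_reachable (Set.mem_insert y C) fun x hx => ?_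
  rcases hx with rfl | hx
  · exact Reachable.refl _
  obtain ⟨u, hu, hyu, hux⟩ := hCy hx
  have hyu' : (spanningInduce H (insert y C)).Adj y u :=
    spanningInduce_adj.mpr ⟨Set.mem_insert _ _, Set.mem_insert_of_mem _ hu, hyu⟩
  exact hyu'.reachable.trans (hux.mono (spanningInduce_mono (Set.subset_insert y C)))

lemma exists_isConnectedVertexCover_ncard_le_succ [Finite V] (hconn : H.Connected)
    (hfree : HFree (pathGraph 5) H) (hC : _root_.IsVertexCover H C) :
    ∃ D, IsConnectedVertexCover H D ∧ D.ncard ≤ C.ncard + 1 := by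
  by_cases hCV : C = Set.univ
  · subst hCV
    exact ⟨Set.univ, ⟨hC, (induceUnivIso H).connected_iff.mpr hconn⟩, Nat.le_succ _⟩
  obtain ⟨y, -, hCy⟩ := exists_subset_reachThrough hconn hfree hC hCV
  have hcover : _root_.IsVertexCover H (insert y C) := fun _ _ huv =>
    (hC huv).imp (Set.mem_insert_of_mem y) (Set.mem_insert_of_mem y)
  exact ⟨insert y C, ⟨hcover, induce_insert_connected_of_subset_reachThrough hCy⟩,
    Set.ncard_insert_le y C⟩

lemma tauc_le_tau_add_one [Finite V] (hconn : H.Connected) (hfree : HFree (pathGraph 5) H) :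
    tauc H ≤ tau H + 1 := by
  obtain ⟨C, hC, hCcard⟩ := exists_isVertexCover_ncard_eq_tau H
  obtain ⟨D, hD, hDcard⟩ := exists_isConnectedVertexCover_ncard_le_succ hconn hfree hC
  exact (tauc_le_ncard hD).trans (hCcard ▸ hDcard)

end ConnectedCover

section PairCover

variable {V : Type} {H : SimpleGraph V} {C : Set V} {a b y : V}

lemma IsVertexCover.insert_of_forall_adj (hC : _root_.IsVertexCover H (insert b C))
    (hb : ∀ z, H.Adj b z → z = y) : _root_.IsVertexCover H (insert y C) := by
  intro u v huv
  rcases hC huv with (rfl | hu) | (rfl | hv)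
  · exact Or.inr (hb v huv ▸ Set.mem_insert _ _)
  · exact Or.inl (Set.mem_insert_of_mem _ hu)
  · exact Or.inl (hb u huv.symm ▸ Set.mem_insert _ _)
  · exact Or.inr (Set.mem_insert_of_mem _ hv)

lemma exists_adj_adj_of_isVertexCover_pair (hconn : H.Connected)
    (hC : _root_.IsVertexCover H {a, b}) (hab : a ≠ b) (hnadj : ¬H.Adj a b) :
    ∃ y, H.Adj a y ∧ H.Adj b y := by
  obtain ⟨⟨⟨p, q⟩, hpq⟩, -, hp, hq⟩ := (hconn.preconnected a b).some.exists_boundary_dart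
      {v | v = a ∨ H.Adj a v} (Or.inl rfl) (by simp [hab.symm, hnadj])
  simp only [Set.mem_ofPred_eq, not_or] at hp hq
  rcases hp with rfl | hap
  · exact absurd hpq hq.2
  rcases hC hpq with (rfl | rfl) | (rfl | rfl)
  · exact absurd hap H.irrefl
  · exact absurd hap hnadj
  · exact absurd rfl hq.1
  · exact ⟨p, hap, hpq.symm⟩

lemma exists_isConnectedVertexCover_ncard_le_two (hconn : H.Connected)
    (h5 : HFree (pathGraph 5) H) (h4 : HFree (cycleGraph 4) H)
    (hC : _root_.IsVertexCover H {a, b}) (hab : a ≠ b) :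
    ∃ D, IsConnectedVertexCover H D ∧ D.ncard ≤ 2 := by
  have hpair : ∀ {u v : V}, H.Adj u v → ({u, v} : Set V).ncard ≤ 2 :=
    fun h => (Set.ncard_pair h.ne).le
  by_cases hadj : H.Adj a b
  · exact ⟨_, ⟨hC, induce_pair_connected_of_adj hadj⟩, hpair hadj⟩
  obtain ⟨y, hay, hby⟩ := exists_adj_adj_of_isVertexCover_pair hconn hC hab hadj
  have hnot_mem : ∀ {v}, H.Adj a v ∨ H.Adj b v → v ∉ ({a, b} : Set V) := by
    rintro v hv (rfl | rfl) <;> rcases hv with h | h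
    exacts [H.irrefl h, hadj h.symm, hadj h, H.irrefl h]
  have houtside : ∀ {v w}, H.Adj a v ∨ H.Adj b v → H.Adj a w ∨ H.Adj b w → ¬H.Adj v w :=
    fun hv hw hvw => (hC hvw).elim (hnot_mem hv) (hnot_mem hw)
  have hunique : ∀ x, H.Adj a x → H.Adj b x → x = y := fun x hax hbx => by
    by_contra hxy
    exact h4.false_of_induced_cycle4 hay.symm hax hbx.symm hby (houtside (.inl hay) (.inl hax))
      hadj (Ne.symm hxy) hab
  by_cases hb : ∀ z, H.Adj b z → z = y
  · exact ⟨{y, a}, ⟨(Set.pair_comm a b ▸ hC).insert_of_forall_adj hb,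
      induce_pair_connected_of_adj hay.symm⟩, hpair hay.symm⟩
  by_cases ha : ∀ z, H.Adj a z → z = y
  · exact ⟨{y, b}, ⟨hC.insert_of_forall_adj ha, induce_pair_connected_of_adj hby.symm⟩,
      hpair hby.symm⟩
  simp only [not_forall] at ha hb
  obtain ⟨w, haw, hwy⟩ := ha
  obtain ⟨z, hbz, hzy⟩ := hb
  exact (h5.false_of_induced_path5 haw.symm hay hby.symm hbz
    (houtside (.inl haw) (.inl hay)) (fun h => hwy (hunique w haw h.symm))
    (houtside (.inl haw) (.inr hbz)) hadj (fun h => hzy (hunique z h hbz))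
    (houtside (.inl hay) (.inr hbz))).elim

end PairCover

section Main

variable {V : Type} {H : SimpleGraph V}

lemma tauc_le_tau_of_tau_le_two [Finite V] (hconn : H.Connected) (hedge : H.edgeSet.Nonempty)
    (h5 : HFree (pathGraph 5) H) (h4 : HFree (cycleGraph 4) H) (htau : tau H ≤ 2) :
    tauc H ≤ tau H := by
  obtain ⟨C, hC, hCcard⟩ := exists_isVertexCover_ncard_eq_tau H
  rw [← hCcard] at htau ⊢
  interval_cases hcard : C.ncard
  · obtain ⟨e, he⟩ := hedge
    induction e with
    | h u v => exact (((Set.ncard_eq_zero).mp hcard ▸ hC) he).elim nofun nofun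
  · obtain ⟨a, rfl⟩ := Set.ncard_eq_one.mp hcard
    exact (tauc_le_ncard ⟨hC, Connected.of_subsingleton⟩).trans_eq hcard
  · obtain ⟨a, b, hab, rfl⟩ := Set.ncard_eq_two.mp hcard
    obtain ⟨D, hD, hDcard⟩ := exists_isConnectedVertexCover_ncard_le_two hconn h5 h4 hC hab
    exact (tauc_le_ncard hD).trans hDcard

theorem three_mul_tauc_le_four_mul_tau [Finite V] (hconn : H.Connected)
    (hedge : H.edgeSet.Nonempty) (h5 : HFree (pathGraph 5) H) (h4 : HFree (cycleGraph 4) H) :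
    3 * tauc H ≤ 4 * tau H := by
  rcases le_or_gt (tau H) 2 with htau | htau
  · have := tauc_le_tau_of_tau_le_two hconn hedge h5 h4 htau
    omega
  · have := tauc_le_tau_add_one hconn h5
    omega

end Main

/-- The following are equivalent: (i) every connected induced subgraph `H` of `G` with
at least one edge satisfies `3τ_c(H) ≤ 4τ(H)`; (ii) `G` is `(P₅, C₄)`-free. -/
theorem poc_four_thirds_characterization {V : Type} [Fintype V] (G : SimpleGraph V) :
    (∀ S : Set V, (G.induce S).Connected → (G.induce S).edgeSet.Nonempty →
        3 * tauc (G.induce S) ≤ 4 * tau (G.induce S)) ↔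
      (HFree (SimpleGraph.pathGraph 5) G ∧ HFree (SimpleGraph.cycleGraph 4) G) := by
  constructor
  · intro h
    refine ⟨⟨fun f => ?_⟩, ⟨fun f => ?_⟩⟩
    · obtain ⟨S, hS, hSe, hlt⟩ := exists_induce_four_mul_tau_lt_of_embedding f
        (pathGraph_connected 4) (i := 0) (j := 1) (by simp [pathGraph_adj])
        tau_pathGraph_five_le three_le_tauc_pathGraph_five
      exact hlt.not_ge (h S hS hSe)
    · obtain ⟨S, hS, hSe, hlt⟩ := exists_induce_four_mul_tau_lt_of_embedding f
        cycleGraph_connected (i := 0) (j := 1) (by decide)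
        tau_cycleGraph_four_le three_le_tauc_cycleGraph_four
      exact hlt.not_ge (h S hS hSe)
  · rintro ⟨h5, h4⟩ S hS hSe
    exact three_mul_tauc_le_four_mul_tau hS hSe (h5.induce S) (h4.induce S)
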